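/- arXiv:2303.15573 — 4 statements merged into one kernel-verified Lean document; each statement's English description precedes it below -/
import Mathlib

section
/- Let C be a finite set of pairs (π, π₀) ∈ ℝⁿ × ℝ, let Q = {x ∈ ℝⁿ : ⟪π, x⟫ ≤ π₀ for every (π, π₀) ∈ C}, and let x̂ ∈ Q. Let N be a natural number, let x : ℕ → ℝⁿ be a sequence, and let σ : ℕ → C be a choice of cuts such that for every index i < N: (i) x i ∉ Q; (ii) the cut σ i is violated at x i, i.e. ⟪(σ i).π, x i⟫ > (σ i).π₀; (iii) x (i+1) lies on the segment joining x i and x̂; and (iv) the cut σ i is tight at x (i+1), i.e. ⟪(σ i).π, x (i+1)⟫ = (σ i).π₀. Then N ≤ card C. Consequently, the iterative method for the Fenchel sub-problem terminates (reaches a point of Q) after at most card C secondary separations. -/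
/-!
A cut generated at step `i` is tight at `x (i + 1)` and valid at `x̂`; since every later
iterate lies on a segment towards `x̂`, by convexity of the half-space the cut stays
satisfied at all later iterates. A cut generated at step `j > i` is violated at `x j`, so
it differs from the one generated at step `i`. The generated cuts are therefore pairwise
distinct elements of `C`.
-/

open Finset
open scoped RealInnerProductSpace

section

variable {E : Type*} [NormedAddCommGroup E] [InnerProductSpace ℝ E]

theorem convex_inner_le (u : E) (r : ℝ) : Convex ℝ {y : E | ⟪u, y⟫ ≤ r} :=
  convex_halfSpace_le (innerₛₗ ℝ u).isLinear r

theorem inner_le_of_mem_segment {u a b y : E} {r : ℝ} (ha : ⟪u, a⟫ ≤ r)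
    (hb : ⟪u, b⟫ ≤ r) (hy : y ∈ segment ℝ a b) : ⟪u, y⟫ ≤ r :=
  (convex_inner_le u r).segment_subset ha hb hy

variable {x : ℕ → E} {xh : E} {N : ℕ}

theorem inner_le_of_segment_chain (hseg : ∀ k < N, x (k + 1) ∈ segment ℝ (x k) xh)
    {u : E} {r : ℝ} (hxh : ⟪u, xh⟫ ≤ r) {m : ℕ} (hm : ⟪u, x m⟫ ≤ r) :
    ∀ j, m ≤ j → j ≤ N → ⟪u, x j⟫ ≤ r := by
  intro j hmj
  induction j, hmj using Nat.le_induction with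
  | base => exact fun _ => hm
  | succ k _ ih =>
    intro hkN
    exact inner_le_of_mem_segment (ih (by omega)) hxh (hseg k (by omega))

theorem injOn_range_of_violated_then_tight {σ : ℕ → E × ℝ}
    (hxh : ∀ i < N, ⟪(σ i).1, xh⟫ ≤ (σ i).2)
    (hviol : ∀ i < N, ⟪(σ i).1, x i⟫ > (σ i).2)
    (hseg : ∀ i < N, x (i + 1) ∈ segment ℝ (x i) xh)
    (htight : ∀ i < N, ⟪(σ i).1, x (i + 1)⟫ = (σ i).2) :
    Set.InjOn σ (range N) := by
  have hne : ∀ i j, i < j → j < N → σ j ≠ σ i := by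
    intro i j hij hjN heq
    have hsat : ⟪(σ i).1, x j⟫ ≤ (σ i).2 :=
      inner_le_of_segment_chain hseg (hxh i (by omega)) (htight i (by omega)).le j hij hjN.le
    have hv := hviol j hjN
    rw [heq] at hv
    linarith
  intro i hi j hj hij
  rw [coe_range, Set.mem_Iio] at hi hj
  by_contra hij'
  rcases Nat.lt_or_gt_of_ne hij' with h | h
  · exact hne i j h hj hij.symm
  · exact hne j i h hi hij

end

theorem stmt_1_general {n : ℕ} (C : Finset (EuclideanSpace ℝ (Fin n) × ℝ))
    (Q : Set (EuclideanSpace ℝ (Fin n)))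
    (hQ : Q = {x | ∀ p ∈ C, (inner ℝ p.1 x : ℝ) ≤ p.2})
    (xh : EuclideanSpace ℝ (Fin n)) (hxh : xh ∈ Q)
    (N : ℕ) (x : ℕ → EuclideanSpace ℝ (Fin n))
    (σ : ℕ → EuclideanSpace ℝ (Fin n) × ℝ)
    (hσC : ∀ i < N, σ i ∈ C)
    (hviol : ∀ i < N, (inner ℝ (σ i).1 (x i) : ℝ) > (σ i).2)
    (hseg : ∀ i < N, x (i + 1) ∈ segment ℝ (x i) xh)
    (htight : ∀ i < N, (inner ℝ (σ i).1 (x (i + 1)) : ℝ) = (σ i).2) :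
    N ≤ C.card := by
  subst hQ
  have hinj : Set.InjOn σ (range N) :=
    injOn_range_of_violated_then_tight (fun i hi => hxh _ (hσC i hi)) hviol hseg htight
  calc N = (range N).card := (card_range N).symm
    _ ≤ C.card := card_le_card_of_injOn σ (fun i hi => hσC i (mem_range.mp hi)) hinj

/-- Finite termination of the iterative Fenchel sub-problem when all secondary cuts
come from a finite set `C` of cuts describing `Q`: the number of iterations `N` is at
most the cardinality of `C`. -/
theorem stmt_1 {n : ℕ} (C : Finset (EuclideanSpace ℝ (Fin n) × ℝ))
    (Q : Set (EuclideanSpace ℝ (Fin n)))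
    (hQ : Q = {x | ∀ p ∈ C, (inner ℝ p.1 x : ℝ) ≤ p.2})
    (xh : EuclideanSpace ℝ (Fin n)) (hxh : xh ∈ Q)
    (N : ℕ) (x : ℕ → EuclideanSpace ℝ (Fin n))
    (σ : ℕ → EuclideanSpace ℝ (Fin n) × ℝ)
    (hσC : ∀ i < N, σ i ∈ C)
    (hnotin : ∀ i < N, x i ∉ Q)
    (hviol : ∀ i < N, (inner ℝ (σ i).1 (x i) : ℝ) > (σ i).2)
    (hseg : ∀ i < N, x (i + 1) ∈ segment ℝ (x i) xh)
    (htight : ∀ i < N, (inner ℝ (σ i).1 (x (i + 1)) : ℝ) = (σ i).2) :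
    N ≤ C.card :=
  stmt_1_general C Q hQ xh hxh N x σ hσC hviol hseg htight
end

section
/- For every norm ν on ℝⁿ there exists ε > 0 such that for all λ, x̌, x*, y ∈ ℝⁿ the following holds: if ⟪λ, z⟫ ≤ ν(z) for every z ∈ ℝⁿ, ⟪λ, x̌ − x*⟫ = ν(x̌ − x*), x̌ ≠ x*, and ⟪λ, y⟫ = ⟪λ, x*⟫, then ‖y − x̌‖₂ ≥ ε · ‖x̌ − x*‖₂. -/
/-!
Any norm `ν` on a finite-dimensional space is equivalent to the Euclidean one,
`c ‖z‖ ≤ ν z ≤ C ‖z‖`. The bound `⟪λ, z⟫ ≤ ν z ≤ C ‖z‖` at `z = λ` gives `‖λ‖ ≤ C`, and since `y`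
lies on the cut, `c ‖x̌ - x*‖ ≤ ν (x̌ - x*) = ⟪λ, x̌ - y⟫ ≤ C ‖x̌ - y‖`. So `ε = c / C` works.
-/

open scoped RealInnerProductSpace

namespace Seminorm

variable {E : Type*} [NormedAddCommGroup E] [NormedSpace ℝ E] [FiniteDimensional ℝ E]

theorem exists_le_mul_norm (p : Seminorm ℝ E) : ∃ C > 0, ∀ x, p x ≤ C * ‖x‖ :=
  p.bound_of_continuous_normedSpace p.convexOn.locallyLipschitz.continuous

/-- The minimum of `p` on the (compact) unit sphere is the constant. -/
theorem exists_mul_norm_le (p : Seminorm ℝ E) (hp : ∀ x, p x = 0 → x = 0) :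
    ∃ c > 0, ∀ x, c * ‖x‖ ≤ p x := by
  have hpos : ∀ x ∈ Metric.sphere (0 : E) 1, 0 < p x := fun x hx =>
    (apply_nonneg p x).lt_of_ne' fun h => by simp [hp x h] at hx
  obtain ⟨c, hc, hcp⟩ := (isCompact_sphere (0 : E) 1).exists_forall_le'
    p.convexOn.locallyLipschitz.continuous.continuousOn hpos
  refine ⟨c, hc, fun x => ?_⟩
  rcases eq_or_ne x 0 with rfl | hx
  · simp
  have hx' : 0 < ‖x‖ := norm_pos_iff.mpr hx
  have hunit : ‖x‖⁻¹ • x ∈ Metric.sphere (0 : E) 1 := by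
    simp [norm_smul, hx'.ne']
  calc c * ‖x‖ ≤ p (‖x‖⁻¹ • x) * ‖x‖ := by gcongr; exact hcp _ hunit
    _ = p x := by rw [map_smul_eq_mul, norm_inv, norm_norm]; field_simp

end Seminorm

section InnerProductSpace

variable {F : Type*} [NormedAddCommGroup F] [InnerProductSpace ℝ F]

theorem norm_le_of_forall_inner_le {l : F} {C : ℝ} (hC : 0 ≤ C)
    (h : ∀ z, ⟪l, z⟫ ≤ C * ‖z‖) : ‖l‖ ≤ C := by
  rcases (norm_nonneg l).eq_or_lt with hl | hl
  · rw [← hl]; exact hC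
  have := h l
  rw [real_inner_self_eq_norm_sq, sq] at this
  exact le_of_mul_le_mul_right this hl

theorem mul_norm_sub_le_mul_norm_sub_of_inner_eq {ν : F → ℝ} {c C : ℝ} (hC : 0 ≤ C)
    (hνC : ∀ z, ν z ≤ C * ‖z‖) (hcν : ∀ z, c * ‖z‖ ≤ ν z) {l xc xs y : F}
    (hl : ∀ z, ⟪l, z⟫ ≤ ν z) (htight : ⟪l, xc - xs⟫ = ν (xc - xs)) (hy : ⟪l, y⟫ = ⟪l, xs⟫) :
    c * ‖xc - xs‖ ≤ C * ‖y - xc‖ :=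
  have hlC : ‖l‖ ≤ C := norm_le_of_forall_inner_le hC fun z => (hl z).trans (hνC z)
  calc c * ‖xc - xs‖ ≤ ν (xc - xs) := hcν _
    _ = ⟪l, xc - y⟫ := by rw [← htight, inner_sub_right, inner_sub_right, hy]
    _ ≤ ‖l‖ * ‖xc - y‖ := real_inner_le_norm l _
    _ ≤ C * ‖y - xc‖ := by rw [norm_sub_rev]; gcongr

end InnerProductSpace

/-- Quantitative progress bound: for every norm `ν` on `ℝⁿ` there is `ε > 0` such that
projecting the separated point onto the generated cut advances it by at least `ε` times
its `ℓ₂` distance to the nearest point. -/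
theorem stmt_2 {n : ℕ} (ν : EuclideanSpace ℝ (Fin n) → ℝ)
    (hadd : ∀ x y, ν (x + y) ≤ ν x + ν y)
    (hsmul : ∀ (a : ℝ) (x : EuclideanSpace ℝ (Fin n)), ν (a • x) = |a| * ν x)
    (hdef : ∀ x, ν x = 0 → x = 0) :
    ∃ ε > (0 : ℝ), ∀ l xc xs y : EuclideanSpace ℝ (Fin n),
      (∀ z, (inner ℝ l z : ℝ) ≤ ν z) →
      (inner ℝ l (xc - xs) : ℝ) = ν (xc - xs) →
      xc ≠ xs →
      (inner ℝ l y : ℝ) = (inner ℝ l xs : ℝ) →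
      ‖y - xc‖ ≥ ε * ‖xc - xs‖ := by
  let p : Seminorm ℝ (EuclideanSpace ℝ (Fin n)) := .of ν hadd hsmul
  obtain ⟨C, hC, hνC⟩ := p.exists_le_mul_norm
  obtain ⟨c, hc, hcν⟩ := p.exists_mul_norm_le hdef
  refine ⟨c / C, div_pos hc hC, fun l xc xs y hl htight _ hy => ?_⟩
  rw [ge_iff_le, div_mul_eq_mul_div, div_le_iff₀ hC, mul_comm _ C]
  exact mul_norm_sub_le_mul_norm_sub_of_inner_eq hC.le hνC hcν hl htight hy
end

section
/- Let K be a finite set, D : K → ℝ, π : K → ℝ, c ∈ ℝ, and π_o ∈ ℝ with π_o ≥ 0. Consider the value V = sup{ ∑_{k ∈ S} π k − π_o · o : S ⊆ K, o ∈ ℝ, o ≥ 0, ∑_{k ∈ S} D k ≤ c + o }. Then (a) V = max over subsets S ⊆ K of ( ∑_{k ∈ S} π k − π_o · max(0, ∑_{k ∈ S} D k − c) ), and this maximum is attained; and (b) if moreover D k ≥ 0 for all k, c ≥ 0, and ∑_{k ∈ K} D k ≥ c, then V equals the maximum of the two knapsack values V₁ = max{ ∑_{k ∈ S} π k : S ⊆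 K, ∑_{k ∈ S} D k ≤ c } and V₂ = max{ ∑_{k ∈ S} π k − π_o·(∑_{k ∈ S} D k − c) : S ⊆ K, ∑_{k ∈ S} D k ≥ c }. -/
/-!
For a fixed selection with load `w`, the cheapest feasible overflow is `max 0 (w - c)`, because
`π_o ≥ 0` makes the objective nonincreasing in `o`. So the mixed-integer supremum is the maximum
over selections of `p - π_o * max 0 (w - c)`, which a finite family attains. Splitting the
selections by the sign of `w - c` removes the `max` and writes this same family of values as the
union of the two knapsack value sets.
-/

open Set

section SoftCapacity

variable {α : Type*} (w p : α → ℝ) (c πo : ℝ)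

def softCapacityValue (x : α) : ℝ :=
  p x - πo * max 0 (w x - c)

variable {w p c πo}

theorem softCapacityValue_of_le {x : α} (h : w x ≤ c) :
    softCapacityValue w p c πo x = p x := by
  simp [softCapacityValue, max_eq_left (sub_nonpos.2 h)]

theorem softCapacityValue_of_ge {x : α} (h : c ≤ w x) :
    softCapacityValue w p c πo x = p x - πo * (w x - c) := by
  rw [softCapacityValue, max_eq_right (sub_nonneg.2 h)]

theorem le_softCapacityValue (hπo : 0 ≤ πo) {x : α} {o : ℝ} (ho : 0 ≤ o) (hw : w x ≤ c + o) :
    p x - πo * o ≤ softCapacityValue w p c πo x := by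
  have : max 0 (w x - c) ≤ o := max_le ho (by linarith)
  unfold softCapacityValue
  linarith [mul_le_mul_of_nonneg_left this hπo]

theorem softCapacityValue_mem_overflowValues (x : α) :
    softCapacityValue w p c πo x ∈
      {v : ℝ | ∃ x, ∃ o : ℝ, 0 ≤ o ∧ w x ≤ c + o ∧ v = p x - πo * o} :=
  ⟨x, max 0 (w x - c), le_max_left _ _, by linarith [le_max_right 0 (w x - c)], rfl⟩

theorem sSup_overflowValues_eq (hπo : 0 ≤ πo) {m : ℝ}
    (hm : IsGreatest (range (softCapacityValue w p c πo)) m) :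
    sSup {v : ℝ | ∃ x, ∃ o : ℝ, 0 ≤ o ∧ w x ≤ c + o ∧ v = p x - πo * o} = m := by
  obtain ⟨⟨x₀, rfl⟩, hmax⟩ := hm
  refine IsGreatest.csSup_eq ⟨softCapacityValue_mem_overflowValues x₀, ?_⟩
  rintro _ ⟨x, o, ho, hw, rfl⟩
  exact (le_softCapacityValue hπo ho hw).trans (hmax (mem_range_self x))

theorem knapsackValues_union_eq_range :
    {v : ℝ | ∃ x, w x ≤ c ∧ v = p x} ∪ {v : ℝ | ∃ x, c ≤ w x ∧ v = p x - πo * (w x - c)} =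
      range (softCapacityValue w p c πo) := by
  ext v
  constructor
  · rintro (⟨x, h, rfl⟩ | ⟨x, h, rfl⟩)
    · exact ⟨x, softCapacityValue_of_le h⟩
    · exact ⟨x, softCapacityValue_of_ge h⟩
  · rintro ⟨x, rfl⟩
    rcases le_total (w x) c with h | h
    · exact Or.inl ⟨x, h, softCapacityValue_of_le h⟩
    · exact Or.inr ⟨x, h, softCapacityValue_of_ge h⟩

theorem max_sSup_knapsackValues_eq {m : ℝ}
    (hm : IsGreatest (range (softCapacityValue w p c πo)) m)
    (hle : ∃ x, w x ≤ c) (hge : ∃ x, c ≤ w x) :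
    max (sSup {v : ℝ | ∃ x, w x ≤ c ∧ v = p x})
        (sSup {v : ℝ | ∃ x, c ≤ w x ∧ v = p x - πo * (w x - c)}) = m := by
  have hunion := knapsackValues_union_eq_range (w := w) (p := p) (c := c) (πo := πo)
  have hbdd := hm.bddAbove
  rw [← hunion] at hm hbdd
  obtain ⟨x₁, h₁⟩ := hle
  obtain ⟨x₂, h₂⟩ := hge
  rw [← csSup_union (hbdd.mono subset_union_left) ⟨_, x₁, h₁, rfl⟩
    (hbdd.mono subset_union_right) ⟨_, x₂, h₂, rfl⟩, hm.csSup_eq]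

end SoftCapacity

/-- The knapsack oracle `(O_a)`: with `π_o ≥ 0`, (a) the supremum over `(S, o)` is
attained at `o = max 0 (∑_{k∈S} D k − c)` for some best subset `S₀`; (b) under the
additional assumptions, it equals the maximum of the two knapsack values. -/
theorem stmt_14 {K : Type*} [Fintype K] (D : K → ℝ) (π : K → ℝ) (c : ℝ)
    (πo : ℝ) (hπo : 0 ≤ πo) :
    (∃ S₀ : Finset K,
      (∀ S : Finset K,
        (∑ k ∈ S, π k) - πo * max 0 ((∑ k ∈ S, D k) - c)
          ≤ (∑ k ∈ S₀, π k) - πo * max 0 ((∑ k ∈ S₀, D k) - c)) ∧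
      sSup {v : ℝ | ∃ S : Finset K, ∃ o : ℝ, 0 ≤ o ∧ (∑ k ∈ S, D k) ≤ c + o ∧
          v = (∑ k ∈ S, π k) - πo * o}
        = (∑ k ∈ S₀, π k) - πo * max 0 ((∑ k ∈ S₀, D k) - c))
    ∧ ((∀ k, 0 ≤ D k) → 0 ≤ c → c ≤ ∑ k, D k →
      sSup {v : ℝ | ∃ S : Finset K, ∃ o : ℝ, 0 ≤ o ∧ (∑ k ∈ S, D k) ≤ c + o ∧
          v = (∑ k ∈ S, π k) - πo * o}
        = max
          (sSup {v : ℝ | ∃ S : Finset K, (∑ k ∈ S, D k) ≤ c ∧ v = ∑ k ∈ S, π k})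
          (sSup {v : ℝ | ∃ S : Finset K, c ≤ ∑ k ∈ S, D k ∧
              v = (∑ k ∈ S, π k) - πo * ((∑ k ∈ S, D k) - c)})) := by
  set f := softCapacityValue (fun S : Finset K => ∑ k ∈ S, D k) (fun S => ∑ k ∈ S, π k) c πo
  obtain ⟨S₀, hS₀⟩ := Finite.exists_max f
  have hgreatest : IsGreatest (range f) (f S₀) := ⟨mem_range_self S₀, forall_mem_range.2 hS₀⟩
  have hsup : _ = f S₀ := sSup_overflowValues_eq hπo hgreatest
  refine ⟨⟨S₀, hS₀, hsup⟩, fun _ hc hcD => ?_⟩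
  rw [hsup]
  exact (max_sSup_knapsackValues_eq hgreatest ⟨∅, by simpa using hc⟩ ⟨Finset.univ, hcD⟩).symm
end

section
/- Let n ≥ 1 and let S ⊆ ℝⁿ be a set such that every s ∈ S has first coordinate s₁ ∈ {0, 1}. Let π ∈ ℝⁿ and π₀, γ₀ ∈ ℝ satisfy: ⟪π, s⟫ ≤ π₀ for every s ∈ S with s₁ = 1, and ⟪π, s⟫ ≤ γ₀ for every s ∈ S with s₁ = 0. Define γ = π + (γ₀ − π₀) • e₁, where e₁ is the first standard basis vector. Then ⟪γ, x⟫ ≤ γ₀ for every x in the convex hull of S. -/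
/-!
On a point `s` of `S` the lifted cut reads `⟪π, s⟫ + (γ₀ - π₀) s₁ ≤ γ₀`: for `s₁ = 0` this is
the defining property of `γ₀`, for `s₁ = 1` it is the original cut `⟪π, s⟫ ≤ π₀`. A half-space
containing `S` contains its convex hull.
-/

open scoped RealInnerProductSpace

theorem inner_le_of_mem_convexHull {E : Type*} [NormedAddCommGroup E] [InnerProductSpace ℝ E]
    {S : Set E} {γ : E} {b : ℝ} (hS : ∀ s ∈ S, ⟪γ, s⟫ ≤ b) {x : E}
    (hx : x ∈ convexHull ℝ S) : ⟪γ, x⟫ ≤ b :=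
  convexHull_min hS (convex_halfSpace_le (innerₛₗ ℝ γ).isLinear b) hx

namespace EuclideanSpace

variable {ι : Type*} [Fintype ι] [DecidableEq ι]

theorem inner_add_smul_single_one_left (π s : EuclideanSpace ℝ ι) (c : ℝ) (i : ι) :
    ⟪π + c • single i (1 : ℝ), s⟫ = ⟪π, s⟫ + c * s i := by
  rw [inner_add_left, real_inner_smul_left, inner_single_left, map_one, one_mul]

theorem inner_lift_le {π s : EuclideanSpace ℝ ι} {π₀ γ₀ : ℝ} {i : ι}
    (hs : s i = 0 ∨ s i = 1) (h1 : s i = 1 → ⟪π, s⟫ ≤ π₀) (h0 : s i = 0 → ⟪π, s⟫ ≤ γ₀) :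
    ⟪π + (γ₀ - π₀) • single i (1 : ℝ), s⟫ ≤ γ₀ := by
  rw [inner_add_smul_single_one_left]
  rcases hs with hs | hs
  · simpa [hs] using h0 hs
  · rw [hs, mul_one]
    linarith [h1 hs]

end EuclideanSpace

/-- Correctness of the sequential lifting step: a cut valid on the points of `S` with
first coordinate `1`, together with the lifting value `γ₀` bounding the points with
first coordinate `0`, yields a cut `⟪γ, x⟫ ≤ γ₀` valid on the convex hull of `S`,
where `γ = π + (γ₀ − π₀) • e₁`. -/
theorem stmt_16 {n : ℕ} (hn : 1 ≤ n) (S : Set (EuclideanSpace ℝ (Fin n)))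
    (hS : ∀ s ∈ S, s ⟨0, hn⟩ = 0 ∨ s ⟨0, hn⟩ = 1)
    (π : EuclideanSpace ℝ (Fin n)) (π₀ γ₀ : ℝ)
    (h1 : ∀ s ∈ S, s ⟨0, hn⟩ = 1 → (inner ℝ π s : ℝ) ≤ π₀)
    (h0 : ∀ s ∈ S, s ⟨0, hn⟩ = 0 → (inner ℝ π s : ℝ) ≤ γ₀)
    (γ : EuclideanSpace ℝ (Fin n))
    (hγ : γ = π + (γ₀ - π₀) • EuclideanSpace.single ⟨0, hn⟩ (1 : ℝ)) :
    ∀ x ∈ convexHull ℝ S, (inner ℝ γ x : ℝ) ≤ γ₀ := by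
  subst hγ
  exact fun x hx => inner_le_of_mem_convexHull
    (fun s hs => EuclideanSpace.inner_lift_le (hS s hs) (h1 s hs) (h0 s hs)) hx
end
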